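/- arXiv:1103.3928 — 2 statements merged into one kernel-verified Lean document; each statement's English description precedes it below -/
import Mathlib

section
/- Fix n ≥ 1. For a prime p, let h_p : GL_n(𝔽_p) → [0,1]^{n²} send A = (a_ij) to the vector (a₁₁/p, …, a_nn/p), where the entries a_ij are represented by integers in {0,…,p−1}. Let R ⊆ [0,1]^{n²} be a measurable set such that for every ε > 0 there exist two finite collections of non-overlapping rectangles R_1,…,R_k and R^1,…,R^l with ∪_{i=1}^k R_i ⊆ R ⊆ ∪_{j=1}^l R^j, area(R \ ∪R_i) < ε and area(∪R^j \ R) < ε. Then lim_{p→∞, p prime} (#(Image(h_p) ∩ R))/#GL_n(𝔽_p) = area(R). -/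
open MeasureTheory Filter Topology

/-- A rectangle in `ι → ℝ`: a product of intervals. -/
def IsRect {ι : Type} (S : Set (ι → ℝ)) : Prop :=
  ∃ I : ι → Set ℝ, (∀ i, (I i).OrdConnected) ∧ S = Set.univ.pi I

/-- The map `h_p` sending `A ∈ GL_n(𝔽_p)` to the point of `[0,1]^{n²}` whose coordinates are
the entries of `A`, represented by integers in `{0,…,p-1}`, divided by `p`. -/
noncomputable def hmap (n p : ℕ) (A : Matrix.GeneralLinearGroup (Fin n) (ZMod p)) :
    Fin n × Fin n → ℝ :=
  fun ij => (((A : Matrix (Fin n) (Fin n) (ZMod p)) ij.1 ij.2).val : ℝ) / p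

/-!
The hypothesis on `R` is Jordan measurability, so the frontier of `R` is null. By the Riemann-sum
description of volume (`tendsto_card_div_pow_atTop_volume`), the points of the lattice
`p⁻¹ ℤ^{n²}` lying in `R ∩ [0,1)^{n²}` then number `p^{n²} vol R + o(p^{n²})`. These lattice points
are the images under `h_p` of all of `M_n(𝔽_p)`, and the singular matrices are negligible:
`#GL_n(𝔽_p) / p^{n²} = ∏_{i<n} (1 - p^{i-n}) → 1`.
-/

open Set Submodule
open scoped Pointwise

theorem ncard_le_ncard_inter_add_ncard_sub {α : Type*} {X S T : Set α} (hT : T.Finite)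
    (hX : X ⊆ T) (hS : S ⊆ T) : (X.ncard : ℝ) ≤ (X ∩ S).ncard + T.ncard - S.ncard := by
  have hXS : (X \ S).ncard ≤ (T \ S).ncard := ncard_le_ncard (sdiff_subset_sdiff_left hX) hT.sdiff
  rw [← ncard_inter_add_ncard_sdiff_eq_ncard X S (hT.subset hX), add_sub_assoc,
    ← cast_ncard_sdiff hS hT, Nat.cast_add]
  gcongr

section Frontier

variable {α : Type*} [TopologicalSpace α]

theorem frontier_subset_of_subset_of_subset {A R C : Set α} (hAR : A ⊆ R) (hRC : R ⊆ C) :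
    frontier R ⊆ (R \ A) ∪ (C \ R) ∪ frontier A ∪ frontier C := by
  rintro x ⟨hx_closure, hx_interior⟩
  by_cases hxR : x ∈ R
  · by_cases hxA : x ∈ A
    · exact Or.inl (Or.inr ⟨subset_closure hxA, fun h => hx_interior (interior_mono hAR h)⟩)
    · exact Or.inl (Or.inl (Or.inl ⟨hxR, hxA⟩))
  · by_cases hxC : x ∈ C
    · exact Or.inl (Or.inl (Or.inr ⟨hxC, hxR⟩))
    · exact Or.inr ⟨closure_mono hRC hx_closure, fun h => hxC (interior_subset h)⟩

theorem frontier_iUnion_subset_of_finite {κ : Type*} [Finite κ] (B : κ → Set α) :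
    frontier (⋃ i, B i) ⊆ ⋃ i, frontier (B i) := by
  rintro x ⟨hx_closure, hx_interior⟩
  rw [closure_iUnion_of_finite] at hx_closure
  obtain ⟨i, hi⟩ := mem_iUnion.1 hx_closure
  exact mem_iUnion.2 ⟨i, hi, fun h => hx_interior (interior_mono (subset_iUnion B i) h)⟩

theorem measure_frontier_eq_zero_of_forall_approx [MeasurableSpace α] (μ : Measure α)
    {R : Set α} (h : ∀ ε : ℝ, 0 < ε → ∃ A C, A ⊆ R ∧ R ⊆ C ∧ μ (frontier A) = 0 ∧
      μ (frontier C) = 0 ∧ μ (R \ A) < ENNReal.ofReal ε ∧ μ (C \ R) < ENNReal.ofReal ε) :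
    μ (frontier R) = 0 := by
  refine le_antisymm (ENNReal.le_of_forall_pos_le_add fun ε hε _ => ?_) bot_le
  obtain ⟨A, C, hAR, hRC, hA, hC, hRA, hCR⟩ := h (ε / 2) (by positivity)
  calc μ (frontier R) ≤ μ ((R \ A) ∪ (C \ R) ∪ frontier A ∪ frontier C) :=
        measure_mono (frontier_subset_of_subset_of_subset hAR hRC)
    _ ≤ μ (R \ A) + μ (C \ R) + μ (frontier A) + μ (frontier C) := by
        grw [measure_union_le, measure_union_le, measure_union_le]
    _ ≤ ENNReal.ofReal (ε / 2) + ENNReal.ofReal (ε / 2) := by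
        rw [hA, hC, add_zero, add_zero]
        exact add_le_add hRA.le hCR.le
    _ = 0 + ε := by
        rw [← ENNReal.ofReal_add (by positivity) (by positivity), add_halves, zero_add,
          ENNReal.ofReal_coe_nnreal]

end Frontier

section Rect

variable {ι : Type}

theorem IsRect.ordConnected {S : Set (ι → ℝ)} (hS : IsRect S) : S.OrdConnected := by
  obtain ⟨I, hI, rfl⟩ := hS
  exact ordConnected_pi fun i _ => hI i

theorem IsRect.null_frontier [Fintype ι] {S : Set (ι → ℝ)} (hS : IsRect S) :
    volume (frontier S) = 0 :=
  hS.ordConnected.null_frontier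

theorem null_frontier_iUnion_isRect [Fintype ι] {κ : Type*} [Finite κ] {B : κ → Set (ι → ℝ)}
    (hB : ∀ i, IsRect (B i)) : volume (frontier (⋃ i, B i)) = 0 :=
  measure_mono_null (frontier_iUnion_subset_of_finite B)
    (measure_iUnion_null fun i => (hB i).null_frontier)

end Rect

section UnitGrid

-- The grid `{0, 1/p, …, (p-1)/p}^ι`, written as `[0,1)^ι ∩ p⁻¹ ℤ^ι` to match
-- `tendsto_card_div_pow_atTop_volume`.
def unitGrid (ι : Type*) [Finite ι] (p : ℕ) : Set (ι → ℝ) :=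
  (univ.pi fun _ => Ico 0 1) ∩ (p : ℝ)⁻¹ • (span ℤ (range (Pi.basisFun ℝ ι)) : Set (ι → ℝ))

variable {ι : Type*} [Fintype ι]

theorem div_mem_unitGrid {p : ℕ} [NeZero p] (k : ι → Fin p) :
    (fun i => (k i : ℝ) / p) ∈ unitGrid ι p := by
  have hp : (0 : ℝ) < p := Nat.cast_pos.2 (Nat.pos_of_neZero p)
  refine ⟨fun i _ => ⟨by positivity, (div_lt_one hp).2 (mod_cast (k i).2)⟩, ?_⟩
  rw [mem_inv_smul_set_iff₀ hp.ne', SetLike.mem_coe, Module.Basis.mem_span_iff_repr_mem]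
  intro i
  exact ⟨(k i : ℤ), by simpa using (mul_div_cancel₀ _ hp.ne').symm⟩

theorem unitGrid_subset_Icc (p : ℕ) : unitGrid ι p ⊆ univ.pi fun _ => Icc 0 1 :=
  fun _ hx => Set.pi_mono (fun _ _ => Ico_subset_Icc_self) hx.1

theorem finite_unitGrid {p : ℕ} (hp : p ≠ 0) : (unitGrid ι p).Finite := by
  have hc : (p : ℝ)⁻¹ ≠ 0 := inv_ne_zero (Nat.cast_ne_zero.2 hp)
  have hcube : Bornology.IsBounded (univ.pi fun _ : ι => Ico (0 : ℝ) 1) :=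
    (Metric.isBounded_Icc (0 : ι → ℝ) 1).subset
      ((Set.pi_mono fun _ _ => Ico_subset_Icc_self).trans (pi_univ_Icc 0 1).subset)
  rw [unitGrid, ← smul_inv_smul₀ hc (univ.pi _), ← smul_set_inter₀ hc]
  exact (ZSpan.setFinite_inter _ (hcube.smul₀ _)).smul_set

theorem tendsto_ncard_inter_unitGrid_div_pow {s : Set (ι → ℝ)}
    (hs : s ⊆ univ.pi fun _ => Icc 0 1) (hm : MeasurableSet s) (hf : volume (frontier s) = 0) :
    Tendsto (fun p : ℕ => ((s ∩ unitGrid ι p).ncard : ℝ) / p ^ Fintype.card ι) atTop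
      (𝓝 (volume s).toReal) := by
  set Q : Set (ι → ℝ) := univ.pi fun _ => Ico 0 1
  have hQ : Q.OrdConnected := ordConnected_pi fun _ _ => ordConnected_Ico
  have hQ_ae : Q =ᵐ[volume] Icc (0 : ι → ℝ) 1 := by
    rw [volume_pi]
    exact Measure.univ_pi_Ico_ae_eq_Icc
  rw [show (univ.pi fun _ => Icc 0 1) = Icc (0 : ι → ℝ) 1 from pi_univ_Icc 0 1] at hs
  have hvol : volume (s ∩ Q) = volume s := by
    rw [measure_congr ((ae_eq_refl s).inter hQ_ae), inter_eq_left.2 hs]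
  have hbdd : Bornology.IsBounded (s ∩ Q) :=
    (Metric.isBounded_Icc (0 : ι → ℝ) 1).subset (inter_subset_left.trans hs)
  have hfront : volume (frontier (s ∩ Q)) = 0 :=
    measure_mono_null (frontier_inter_subset s Q) (measure_union_null
      (measure_inter_null_of_null_left _ hf) (measure_inter_null_of_null_right _ hQ.null_frontier))
  have hlim := tendsto_card_div_pow_atTop_volume (s ∩ Q) hbdd
    (hm.inter (MeasurableSet.univ_pi fun _ => measurableSet_Ico)) hfront
  rw [measureReal_def, hvol] at hlim
  simpa only [Nat.card_coe_set_eq, unitGrid, inter_assoc] using hlim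

end UnitGrid

section GeneralLinearGroup

theorem card_GL_div_pow_eq_prod (𝔽 : Type*) [Field 𝔽] [Fintype 𝔽] (n : ℕ) :
    (Nat.card (GL (Fin n) 𝔽) : ℝ) / (Fintype.card 𝔽 : ℝ) ^ (n * n) =
      ∏ i : Fin n, (1 - ((Fintype.card 𝔽 : ℝ) ^ (n - i : ℕ))⁻¹) := by
  have hq₀ : Fintype.card 𝔽 ≠ 0 := Fintype.card_ne_zero
  rw [Matrix.card_GL_field, Nat.cast_prod, pow_mul, ← Fin.prod_const n ((Fintype.card 𝔽 : ℝ) ^ n),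
    ← Finset.prod_div_distrib]
  generalize Fintype.card 𝔽 = q at hq₀ ⊢
  have hq : (q : ℝ) ≠ 0 := Nat.cast_ne_zero.2 hq₀
  have hfactor : ∀ i : Fin n, (((q ^ n - q ^ (i : ℕ) : ℕ) : ℝ)) / (q : ℝ) ^ n =
      1 - ((q : ℝ) ^ (n - i : ℕ))⁻¹ := by
    intro i
    have hi : (i : ℕ) ≤ n := i.2.le
    rw [Nat.cast_sub (Nat.pow_le_pow_right (Nat.pos_of_ne_zero hq₀) hi), Nat.cast_pow,
      Nat.cast_pow, sub_div, div_self (pow_ne_zero _ hq)]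
    nth_rw 2 [← Nat.sub_add_cancel hi]
    rw [pow_add]
    field_simp
  exact Finset.prod_congr rfl fun i _ => hfactor i

theorem tendsto_card_GL_zmod_div_pow (n : ℕ) :
    Tendsto (fun p : ℕ => (Nat.card (GL (Fin n) (ZMod p)) : ℝ) / (p : ℝ) ^ (n * n))
      (atTop ⊓ 𝓟 {p | p.Prime}) (𝓝 1) := by
  have hlim : Tendsto (fun p : ℕ => ∏ i : Fin n, (1 - ((p : ℝ) ^ (n - i : ℕ))⁻¹)) atTop
      (𝓝 (∏ _i : Fin n, (1 - 0))) := by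
    refine tendsto_finsetProd _ fun i _ => tendsto_const_nhds.sub ?_
    exact ((tendsto_pow_atTop (by omega)).comp tendsto_natCast_atTop_atTop).inv_tendsto_atTop
  simp only [sub_zero, Finset.prod_const_one] at hlim
  refine (hlim.mono_left inf_le_left).congr' ?_
  filter_upwards [mem_inf_of_right (mem_principal_self _)] with p hp
  have : Fact p.Prime := ⟨hp⟩
  have hcard := card_GL_div_pow_eq_prod (ZMod p) n
  rw [ZMod.card] at hcard
  exact hcard.symm

end GeneralLinearGroup

section Hmap

variable (n p : ℕ) [NeZero p]

theorem hmap_injective : Function.Injective (hmap n p) := by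
  intro A B hAB
  ext i j
  have hij : ((A i j).val : ℝ) / p = (B i j).val / p := congrFun hAB (i, j)
  rw [div_left_inj' (Nat.cast_ne_zero.2 (NeZero.ne p)), Nat.cast_inj] at hij
  exact ZMod.val_injective p hij

theorem range_hmap_subset_unitGrid : range (hmap n p) ⊆ unitGrid (Fin n × Fin n) p := by
  rintro _ ⟨A, rfl⟩
  exact div_mem_unitGrid fun ij : Fin n × Fin n =>
    ⟨((A : Matrix (Fin n) (Fin n) (ZMod p)) ij.1 ij.2).val, ZMod.val_lt _⟩

end Hmap

theorem ncard_range_hmap_inter_bounds (n p : ℕ) [NeZero p] (R : Set (Fin n × Fin n → ℝ)) :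
    ((R ∩ unitGrid (Fin n × Fin n) p).ncard : ℝ) -
          ((unitGrid (Fin n × Fin n) p).ncard - Nat.card (GL (Fin n) (ZMod p))) ≤
        (range (hmap n p) ∩ R).ncard ∧
      ((range (hmap n p) ∩ R).ncard : ℝ) ≤ (R ∩ unitGrid (Fin n × Fin n) p).ncard := by
  have hS := range_hmap_subset_unitGrid n p
  have hT := finite_unitGrid (ι := Fin n × Fin n) (NeZero.ne p)
  have hXS : R ∩ unitGrid _ p ∩ range (hmap n p) = range (hmap n p) ∩ R := by
    rw [inter_assoc, inter_eq_right.2 hS, inter_comm]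
  rw [← hXS, ← Nat.card_range_of_injective (hmap_injective n p), Nat.card_coe_set_eq]
  constructor
  · linarith [ncard_le_ncard_inter_add_ncard_sub hT (inter_subset_right (s := R)) hS]
  · exact_mod_cast ncard_le_ncard inter_subset_left (hT.subset inter_subset_right)

theorem tendsto_ncard_range_hmap_inter_div_pow (n : ℕ) {R : Set (Fin n × Fin n → ℝ)}
    (hR : R ⊆ univ.pi fun _ => Icc 0 1) (hm : MeasurableSet R) (hf : volume (frontier R) = 0) :
    Tendsto (fun p : ℕ => ((range (hmap n p) ∩ R).ncard : ℝ) / (p : ℝ) ^ (n * n))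
      (atTop ⊓ 𝓟 {p | p.Prime}) (𝓝 (volume R).toReal) := by
  have hcube : IsRect (univ.pi fun _ : Fin n × Fin n => Icc (0 : ℝ) 1) :=
    ⟨_, fun _ => ordConnected_Icc, rfl⟩
  have hX := tendsto_ncard_inter_unitGrid_div_pow hR hm hf
  have hT := tendsto_ncard_inter_unitGrid_div_pow subset_rfl
    (MeasurableSet.univ_pi fun _ => measurableSet_Icc) hcube.null_frontier
  simp only [Fintype.card_prod, Fintype.card_fin, volume_pi_pi, Real.volume_Icc, sub_zero,
    ENNReal.ofReal_one, Finset.prod_const_one, ENNReal.toReal_one] at hX hT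
  simp only [inter_eq_right.2 (unitGrid_subset_Icc _)] at hT
  have hle : atTop ⊓ 𝓟 {p : ℕ | p.Prime} ≤ atTop := inf_le_left
  have hlower := (hX.mono_left hle).sub ((hT.mono_left hle).sub (tendsto_card_GL_zmod_div_pow n))
  rw [sub_self, sub_zero] at hlower
  have hprime : ∀ᶠ p : ℕ in atTop ⊓ 𝓟 {p | p.Prime}, p.Prime :=
    mem_inf_of_right (mem_principal_self _)
  refine tendsto_of_tendsto_of_tendsto_of_le_of_le' hlower (hX.mono_left hle) ?_ ?_
  · filter_upwards [hprime] with p hp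
    have : NeZero p := ⟨hp.ne_zero⟩
    rw [← sub_div, ← sub_div]
    exact div_le_div_of_nonneg_right (ncard_range_hmap_inter_bounds n p R).1 (by positivity)
  · filter_upwards [hprime] with p hp
    have : NeZero p := ⟨hp.ne_zero⟩
    exact div_le_div_of_nonneg_right (ncard_range_hmap_inter_bounds n p R).2 (by positivity)

theorem uniform_distribution_of_GLn_general
    (n : ℕ)
    (R : Set (Fin n × Fin n → ℝ)) (hmeas : MeasurableSet R)
    (hsub : R ⊆ Set.univ.pi fun _ => Set.Icc (0 : ℝ) 1)
    (happrox : ∀ ε : ℝ, 0 < ε →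
      ∃ (k l : ℕ) (Rin : Fin k → Set (Fin n × Fin n → ℝ))
        (Rout : Fin l → Set (Fin n × Fin n → ℝ)),
        (∀ i, IsRect (Rin i)) ∧
        (∀ i j, i ≠ j → Disjoint (interior (Rin i)) (interior (Rin j))) ∧
        (∀ j, IsRect (Rout j)) ∧
        (∀ i j, i ≠ j → Disjoint (interior (Rout i)) (interior (Rout j))) ∧
        (⋃ i, Rin i) ⊆ R ∧ R ⊆ (⋃ j, Rout j) ∧
        volume (R \ ⋃ i, Rin i) < ENNReal.ofReal ε ∧
        volume ((⋃ j, Rout j) \ R) < ENNReal.ofReal ε) :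
    Tendsto
      (fun p : ℕ =>
        ((Set.range (hmap n p) ∩ R).ncard : ℝ) /
          (Nat.card (Matrix.GeneralLinearGroup (Fin n) (ZMod p)) : ℝ))
      (atTop ⊓ Filter.principal {p : ℕ | p.Prime}) (𝓝 (volume R).toReal) := by
  have hfrontier : volume (frontier R) = 0 := by
    refine measure_frontier_eq_zero_of_forall_approx volume fun ε hε => ?_
    obtain ⟨k, l, Rin, Rout, hin, -, hout, -, hinR, hRout, hεin, hεout⟩ := happrox ε hε
    exact ⟨_, _, hinR, hRout, null_frontier_iUnion_isRect hin, null_frontier_iUnion_isRect hout,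
      hεin, hεout⟩
  have hlim := (tendsto_ncard_range_hmap_inter_div_pow n hsub hmeas hfrontier).div
    (tendsto_card_GL_zmod_div_pow n) one_ne_zero
  rw [div_one] at hlim
  refine hlim.congr' ?_
  filter_upwards [mem_inf_of_right (mem_principal_self _)] with p hp
  exact div_div_div_cancel_right₀ (pow_ne_zero _ (Nat.cast_ne_zero.2 hp.ne_zero)) _ _

theorem uniform_distribution_of_GLn
    (n : ℕ) (hn : 1 ≤ n)
    (R : Set (Fin n × Fin n → ℝ)) (hmeas : MeasurableSet R)
    (hsub : R ⊆ Set.univ.pi fun _ => Set.Icc (0 : ℝ) 1)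
    (happrox : ∀ ε : ℝ, 0 < ε →
      ∃ (k l : ℕ) (Rin : Fin k → Set (Fin n × Fin n → ℝ))
        (Rout : Fin l → Set (Fin n × Fin n → ℝ)),
        (∀ i, IsRect (Rin i)) ∧
        (∀ i j, i ≠ j → Disjoint (interior (Rin i)) (interior (Rin j))) ∧
        (∀ j, IsRect (Rout j)) ∧
        (∀ i j, i ≠ j → Disjoint (interior (Rout i)) (interior (Rout j))) ∧
        (⋃ i, Rin i) ⊆ R ∧ R ⊆ (⋃ j, Rout j) ∧
        volume (R \ ⋃ i, Rin i) < ENNReal.ofReal ε ∧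
        volume ((⋃ j, Rout j) \ R) < ENNReal.ofReal ε) :
    Tendsto
      (fun p : ℕ =>
        ((Set.range (hmap n p) ∩ R).ncard : ℝ) /
          (Nat.card (Matrix.GeneralLinearGroup (Fin n) (ZMod p)) : ℝ))
      (atTop ⊓ Filter.principal {p : ℕ | p.Prime}) (𝓝 (volume R).toReal) :=
  uniform_distribution_of_GLn_general n R hmeas hsub happrox
end

section
/- Fix n ≥ 3. There exists a constant C (depending only on n) such that for every prime power q, every finite field 𝔽_q with q elements, every nontrivial additive character Ψ of 𝔽_q, every matrix 𝓜 ∈ GL_n(𝔽_q), and all matrices U, V ∈ M_n(𝔽_q) with (U,V) ≠ (0,0), one has |K(GL_n(𝔽_q), U, V, 𝓜)| ≤ C · q^{n² − 1}, where K(GL_n(𝔽_q), U, V, 𝓜) = Σ_{X ∈ GL_n(𝔽_q)} Ψ(U·X + V·(𝓜X⁻¹)). -/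
/-!
Write the phase as `X ↦ tr(AX) + tr(BX⁻¹)` with `A = Uᵀ`, `B = VᵀM`; inverting `X` swaps `A` and
`B`, so we may assume `A i a ≠ 0`. Right multiplication by the transvection `1 + s E_{ki}`
(`k ≠ i`) shifts the phase by `s · g X` with `g X = (AX)_{ik} - (X⁻¹B)_{ik}`, so averaging over `s`
and using orthogonality of `Ψ` bounds the sum by the number of zeros of `g`. Right multiplication by
`1 + t E_{mk}` with `m ∉ {i, k}` (this needs `n ≥ 3`) shifts `g` in turn by `t · (AX)_{im}`;
averaging over `t` gives `q · #{g = 0} ≤ q · #{(AX)_{im} = 0} + #GL_n ≤ 2 q^{n²}`, the middle count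
being that of a hyperplane.
-/

open Finset Matrix Module

variable {F : Type*} [Field F] [Fintype F]

section ShiftAveraging

variable [DecidableEq F] {α : Type*} [Fintype α]

theorem norm_sum_addChar_le_card_filter_of_shift {Ψ : AddChar F ℂ} (hΨ : Ψ ≠ 1) (σ : F → α ≃ α)
    {f g : α → F} (hfg : ∀ s x, f (σ s x) = f x + s * g x) :
    ‖∑ x, Ψ (f x)‖ ≤ #{x | g x = 0} := by
  have hq : (Fintype.card F : ℂ) ≠ 0 := Nat.cast_ne_zero.mpr Fintype.card_ne_zero
  have key : (Fintype.card F : ℂ) * ∑ x, Ψ (f x)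
      = Fintype.card F * ∑ x with g x = 0, Ψ (f x) :=
    calc (Fintype.card F : ℂ) * ∑ x, Ψ (f x) = ∑ s : F, ∑ x, Ψ (f (σ s x)) := by
          simp only [Equiv.sum_comp (σ _) (fun x => Ψ (f x)), sum_const, card_univ, nsmul_eq_mul]
      _ = ∑ x, Ψ (f x) * ∑ s : F, Ψ (s * g x) := by
          simp only [hfg, AddChar.map_add_eq_mul, mul_sum]
          exact sum_comm
      _ = Fintype.card F * ∑ x with g x = 0, Ψ (f x) := by
          simp only [AddChar.sum_mulShift _ (AddChar.IsPrimitive.of_ne_one hΨ), sum_filter,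
            mul_sum]
          refine sum_congr rfl fun x _ => ?_
          split_ifs <;> simp [mul_comm]
  rw [mul_right_inj' hq] at key
  rw [key]
  refine (norm_sum_le _ _).trans ?_
  simp

theorem card_mul_card_filter_le_of_shift (σ : F → α ≃ α) {g d : α → F}
    (hgd : ∀ s x, g (σ s x) = g x + s * d x) :
    Fintype.card F * #{x | g x = 0} ≤ Fintype.card F * #{x | d x = 0} + Fintype.card α := by
  have hroots (x : α) :
      #{s : F | g x + s * d x = 0} ≤ (if d x = 0 then Fintype.card F else 0) + 1 := by
    split_ifs with hd
    · exact (card_filter_le _ _).trans (Nat.le_succ _)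
    · refine card_le_one.mpr fun s hs t ht => mul_right_cancel₀ hd ?_
      simp only [mem_filter, mem_univ, true_and] at hs ht
      linear_combination hs - ht
  calc Fintype.card F * #{x | g x = 0} = ∑ s : F, #{x | g (σ s x) = 0} := by
        simp only [card_filter, Equiv.sum_comp (σ _) (fun x => if g x = 0 then 1 else 0),
          sum_const, card_univ, smul_eq_mul]
    _ = ∑ x, #{s : F | g x + s * d x = 0} := by
        simp only [hgd, card_filter]
        exact sum_comm
    _ ≤ ∑ x, ((if d x = 0 then Fintype.card F else 0) + 1) := sum_le_sum fun x _ => hroots x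
    _ = Fintype.card F * #{x | d x = 0} + Fintype.card α := by
        rw [sum_add_distrib, ← sum_filter, sum_const, smul_eq_mul, mul_comm, sum_const, card_univ,
          smul_eq_mul, mul_one]

end ShiftAveraging

theorem Module.Dual.natCard_ker_of_ne_zero {W : Type*} [AddCommGroup W] [Module F W]
    [Module.Finite F W] {φ : Module.Dual F W} (hφ : φ ≠ 0) :
    Nat.card (LinearMap.ker φ) = Fintype.card F ^ (finrank F W - 1) := by
  rw [Module.natCard_eq_pow_finrank (K := F), Nat.card_eq_fintype_card,
    ← φ.finrank_ker_add_one_of_ne_zero hφ, Nat.add_sub_cancel]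

theorem exists_pair_ne_of_three_le_card {ι : Type*} [Fintype ι] [DecidableEq ι]
    (hι : 3 ≤ Fintype.card ι) (i : ι) : ∃ k m, k ≠ i ∧ m ≠ i ∧ k ≠ m := by
  have : 1 < #(univ.erase i) := by rw [card_erase_of_mem (mem_univ i), card_univ]; omega
  obtain ⟨k, m, hk, hm, hkm⟩ := one_lt_card_iff.mp this
  exact ⟨k, m, ne_of_mem_erase hk, ne_of_mem_erase hm, hkm⟩

namespace Matrix

variable {ι R : Type*} [Fintype ι] [DecidableEq ι] [CommRing R]

def transvectionGL {i j : ι} (h : i ≠ j) (c : R) : GeneralLinearGroup ι R where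
  val := transvection i j c
  inv := transvection i j (-c)
  val_inv := by rw [transvection_mul_transvection_same _ _ h, add_neg_cancel, transvection_zero]
  inv_val := by rw [transvection_mul_transvection_same _ _ h, neg_add_cancel, transvection_zero]

@[simp]
theorem coe_transvectionGL {i j : ι} (h : i ≠ j) (c : R) :
    (transvectionGL h c : Matrix ι ι R) = transvection i j c :=
  rfl

@[simp]
theorem coe_transvectionGL_inv {i j : ι} (h : i ≠ j) (c : R) :
    (↑(transvectionGL h c)⁻¹ : Matrix ι ι R) = transvection i j (-c) :=
  rfl

theorem trace_mul_transvection (Y : Matrix ι ι R) (i j : ι) (c : R) :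
    trace (Y * transvection i j c) = trace Y + c * Y j i := by
  rw [transvection, Matrix.mul_add, Matrix.mul_one, trace_add, trace_mul_single, op_smul_eq_mul,
    mul_comm]

omit [DecidableEq ι] in
theorem trace_transpose_mul_eq_sum (A B : Matrix ι ι R) :
    trace (Aᵀ * B) = ∑ i, ∑ j, A i j * B i j := by
  simp only [trace, diag, mul_apply, transpose_apply]
  exact sum_comm

def kloostermanPhase (A B : Matrix ι ι R) (X : GeneralLinearGroup ι R) : R :=
  trace (A * (X : Matrix ι ι R)) + trace (B * (↑X⁻¹ : Matrix ι ι R))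

theorem sum_kloostermanPhase_comm [Fintype R] [DecidableEq R] {M : Type*} [AddCommMonoid M]
    (φ : R → M) (A B : Matrix ι ι R) :
    ∑ X, φ (kloostermanPhase A B X) = ∑ X, φ (kloostermanPhase B A X) := by
  refine Fintype.sum_equiv (Equiv.inv _) _ _ fun X => ?_
  simp only [kloostermanPhase, Equiv.inv_apply, inv_inv, add_comm]

theorem kloostermanPhase_mul_transvectionGL (A B : Matrix ι ι R)
    (X : GeneralLinearGroup ι R) {i k : ι} (h : k ≠ i) (s : R) :
    kloostermanPhase A B (X * transvectionGL h s)
      = kloostermanPhase A B X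
        + s * ((A * (X : Matrix ι ι R)) i k - ((↑X⁻¹ : Matrix ι ι R) * B) i k) := by
  simp only [kloostermanPhase, _root_.mul_inv_rev, Units.val_mul, coe_transvectionGL,
    coe_transvectionGL_inv, ← Matrix.mul_assoc, trace_mul_transvection]
  rw [trace_mul_cycle, trace_mul_transvection, trace_mul_comm B]
  ring

theorem mul_transvectionGL_apply_sub (A B : Matrix ι ι R) (X : GeneralLinearGroup ι R)
    {i k m : ι} (h : m ≠ k) (him : i ≠ m) (t : R) :
    (A * (↑(X * transvectionGL h t) : Matrix ι ι R)) i k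
        - ((↑(X * transvectionGL h t)⁻¹ : Matrix ι ι R) * B) i k
      = (A * (X : Matrix ι ι R)) i k - ((↑X⁻¹ : Matrix ι ι R) * B) i k
        + t * (A * (X : Matrix ι ι R)) i m := by
  simp only [_root_.mul_inv_rev, Units.val_mul, coe_transvectionGL, coe_transvectionGL_inv,
    ← Matrix.mul_assoc, mul_transvection_apply_same]
  rw [Matrix.mul_assoc, transvection_mul_apply_of_ne _ _ _ _ him]
  ring

end Matrix

section FiniteField

variable {ι F : Type*} [Fintype ι] [DecidableEq ι] [Field F] [Fintype F] [DecidableEq F]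

theorem card_filter_mul_apply_eq_zero_le {A : Matrix ι ι F} {i a : ι} (hA : A i a ≠ 0) (m : ι) :
    #{X : GeneralLinearGroup ι F | (A * (X : Matrix ι ι F)) i m = 0}
      ≤ Fintype.card F ^ (Fintype.card ι ^ 2 - 1) := by
  let φ : Module.Dual F (Matrix ι ι F) := entryLinearMap F F i m ∘ₗ LinearMap.mulLeft F A
  have hφ : φ ≠ 0 := fun h => hA <| by
    simpa [φ, mul_single_apply_same] using LinearMap.congr_fun h (single a m 1)
  calc #{X : GeneralLinearGroup ι F | (A * (X : Matrix ι ι F)) i m = 0}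
      = Nat.card {X : GeneralLinearGroup ι F // φ X = 0} := by
        rw [Nat.card_eq_fintype_card, Fintype.card_subtype]; rfl
    _ ≤ Nat.card (LinearMap.ker φ) :=
        Nat.card_le_card_of_injective (fun X => ⟨X.1, X.2⟩) fun X Y h =>
          Subtype.ext (Units.ext (congrArg Subtype.val h))
    _ = Fintype.card F ^ (Fintype.card ι ^ 2 - 1) := by
        rw [Module.Dual.natCard_ker_of_ne_zero hφ, finrank_matrix, finrank_self, mul_one, sq]

theorem card_generalLinearGroup_le :
    Fintype.card (GeneralLinearGroup ι F) ≤ Fintype.card F ^ (Fintype.card ι ^ 2) := by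
  calc Fintype.card (GeneralLinearGroup ι F) ≤ Fintype.card (Matrix ι ι F) :=
        Fintype.card_le_of_injective _ Units.val_injective
    _ = _ := by rw [Module.card_eq_pow_finrank (K := F), finrank_matrix, finrank_self, mul_one, sq]

theorem norm_sum_kloostermanPhase_le_of_ne_zero (hι : 3 ≤ Fintype.card ι) {Ψ : AddChar F ℂ}
    (hΨ : Ψ ≠ 1) {A : Matrix ι ι F} (hA : A ≠ 0) (B : Matrix ι ι F) :
    ‖∑ X, Ψ (kloostermanPhase A B X)‖ ≤ 2 * (Fintype.card F : ℝ) ^ (Fintype.card ι ^ 2 - 1) := by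
  obtain ⟨i, a, hia⟩ : ∃ i a, A i a ≠ 0 := by
    by_contra! h
    exact hA (Matrix.ext h)
  obtain ⟨k, m, hki, hmi, hkm⟩ := exists_pair_ne_of_three_le_card hι i
  let g (X : GeneralLinearGroup ι F) : F :=
    (A * (X : Matrix ι ι F)) i k - ((↑X⁻¹ : Matrix ι ι F) * B) i k
  have hsum := norm_sum_addChar_le_card_filter_of_shift hΨ
    (fun s => Equiv.mulRight (transvectionGL hki s)) (g := g)
    fun s X => kloostermanPhase_mul_transvectionGL A B X hki s
  have hcount := card_mul_card_filter_le_of_shift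
    (fun t => Equiv.mulRight (transvectionGL hkm.symm t)) (g := g)
    (d := fun X => (A * (X : Matrix ι ι F)) i m)
    fun t X => mul_transvectionGL_apply_sub A B X hkm.symm hmi.symm t
  have hd := card_filter_mul_apply_eq_zero_le hia m
  have hG := card_generalLinearGroup_le (ι := ι) (F := F)
  have hN : #{X | g X = 0} ≤ 2 * Fintype.card F ^ (Fintype.card ι ^ 2 - 1) := by
    have he : Fintype.card F ^ (Fintype.card ι ^ 2)
        = Fintype.card F * Fintype.card F ^ (Fintype.card ι ^ 2 - 1) := by
      rw [← pow_succ', Nat.sub_add_cancel (by nlinarith)]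
    refine Nat.le_of_mul_le_mul_left ?_ (Fintype.card_pos (α := F))
    nlinarith
  calc ‖∑ X, Ψ (kloostermanPhase A B X)‖ ≤ #{X | g X = 0} := hsum
    _ ≤ 2 * (Fintype.card F : ℝ) ^ (Fintype.card ι ^ 2 - 1) := by exact_mod_cast hN

theorem norm_sum_kloostermanPhase_le (hι : 3 ≤ Fintype.card ι) {Ψ : AddChar F ℂ}
    (hΨ : Ψ ≠ 1) {A B : Matrix ι ι F} (hAB : ¬(A = 0 ∧ B = 0)) :
    ‖∑ X, Ψ (kloostermanPhase A B X)‖ ≤ 2 * (Fintype.card F : ℝ) ^ (Fintype.card ι ^ 2 - 1) := by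
  by_cases hA : A = 0
  · rw [sum_kloostermanPhase_comm]
    exact norm_sum_kloostermanPhase_le_of_ne_zero hι hΨ (fun hB => hAB ⟨hA, hB⟩) A
  · exact norm_sum_kloostermanPhase_le_of_ne_zero hι hΨ hA B

end FiniteField

/-- For `n ≥ 3`, the matrix Kloosterman sum over `GL_n(𝔽_q)` satisfies the improved bound
`|K(GL_n(𝔽_q), U, V, 𝓜)| ≤ C · q^{n² - 1}`. -/
theorem matrix_kloosterman_improved_bound_GLn (n : ℕ) (hn : 3 ≤ n) :
    ∃ C : ℝ, ∀ (F : Type) [Field F] [Fintype F] [DecidableEq F] (Ψ : AddChar F ℂ),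
      Ψ ≠ 1 →
      ∀ (M : Matrix.GeneralLinearGroup (Fin n) F) (U V : Matrix (Fin n) (Fin n) F),
        ¬(U = 0 ∧ V = 0) →
        ‖∑ X : Matrix.GeneralLinearGroup (Fin n) F,
            Ψ ((∑ i, ∑ j, U i j * (X : Matrix (Fin n) (Fin n) F) i j) +
               (∑ i, ∑ j, V i j *
                 ((M * X⁻¹ : Matrix.GeneralLinearGroup (Fin n) F) :
                   Matrix (Fin n) (Fin n) F) i j))‖ ≤
          C * (Fintype.card F : ℝ) ^ ((n : ℝ) ^ 2 - 1) := by
  refine ⟨2, fun F _ _ _ Ψ hΨ M U V hUV => ?_⟩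
  have hphase (X : GeneralLinearGroup (Fin n) F) :
      (∑ i, ∑ j, U i j * (X : Matrix (Fin n) (Fin n) F) i j) +
        (∑ i, ∑ j, V i j * (↑(M * X⁻¹) : Matrix (Fin n) (Fin n) F) i j)
      = kloostermanPhase Uᵀ (Vᵀ * M) X := by
    rw [kloostermanPhase, ← trace_transpose_mul_eq_sum, ← trace_transpose_mul_eq_sum,
      Units.val_mul, Matrix.mul_assoc]
  have hUV' : ¬(Uᵀ = 0 ∧ Vᵀ * (M : Matrix (Fin n) (Fin n) F) = 0) := by
    rwa [transpose_eq_zero, Units.mul_left_eq_zero, transpose_eq_zero]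
  have hexp : (Fintype.card F : ℝ) ^ ((n : ℝ) ^ 2 - 1) = (Fintype.card F : ℝ) ^ (n ^ 2 - 1) := by
    rw [← Real.rpow_natCast _ (n ^ 2 - 1), Nat.cast_sub (Nat.one_le_pow 2 n (by omega)),
      Nat.cast_pow, Nat.cast_one]
  simp only [hphase, hexp]
  simpa using norm_sum_kloostermanPhase_le (by simpa using hn) hΨ hUV'
end
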